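/- arXiv:1805.03965 — 3 statements merged into one kernel-verified Lean document; each statement's English description precedes it below -/
import Mathlib

section
/- In the cycle C_n with n ≥ 6, given k nodes pairwise at distance at least 3, one can choose for each node v_i a territory T_i = {v_i, w_i} (w_i a neighbor of v_i) such that the territories are pairwise independent, i.e., any node of T_i is at distance at least 2 from any node of T_j for i ≠ j. -/
/-- Graph distance on the cycle `C_n` with vertex set `ZMod n`. -/
def cycleDist (n : ℕ) (a b : ZMod n) : ℕ := min (a - b).val (b - a).val

lemma cycleDist_comm (n : ℕ) (a b : ZMod n) : cycleDist n a b = cycleDist n b a := by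
  unfold cycleDist; exact min_comm _ _

lemma cycleDist_key (n : ℕ) (hn : 6 ≤ n) (a b : ZMod n)
    (h : 3 ≤ cycleDist n a b) : 2 ≤ cycleDist n (a + 1) b := by
  haveI : NeZero n := ⟨by omega⟩
  have h1 : 3 ≤ (a - b).val := le_trans h (min_le_left _ _)
  have h2 : 3 ≤ (b - a).val := le_trans h (min_le_right _ _)
  have hne : a - b ≠ 0 := by
    intro h0
    rw [h0] at h1; simp at h1
  have hba : b - a = -(a - b) := by ring
  have hval : (b - a).val = n - (a - b).val := by
    rw [hba, ZMod.neg_val, if_neg hne]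
  set x := (a - b).val with hx
  have hxlt : x < n := ZMod.val_lt _
  have hxn : x ≤ n - 3 := by omega
  have hone : (1 : ZMod n).val = 1 := ZMod.val_one_eq_one_mod n ▸ Nat.mod_eq_of_lt (by omega)
  have e1 : a + 1 - b = (a - b) + 1 := by ring
  have e2 : b - (a + 1) = (b - a) + (-1) := by ring
  have v1 : (a + 1 - b).val = x + 1 := by
    rw [e1, ZMod.val_add, hone, ← hx, Nat.mod_eq_of_lt (by omega)]
  have hnegone : (-1 : ZMod n).val = n - 1 := by
    rw [ZMod.neg_val, if_neg (by
      intro h0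
      have := congrArg (ZMod.val) h0
      rw [hone, ZMod.val_zero] at this; omega)]
    rw [hone]
  have v2 : (b - (a + 1)).val = n - x - 1 := by
    rw [e2, ZMod.val_add, hnegone, hval]
    have : n - x + (n - 1) = n + (n - x - 1) := by omega
    rw [this, Nat.add_mod_left, Nat.mod_eq_of_lt (by omega)]
  unfold cycleDist
  rw [v1, v2]
  omega

/-- In the cycle `C_n` with `n ≥ 6`, given `k` nodes pairwise at distance at least `3`,
one can choose for each node `v i` a territory `{v i, w i}` with `w i` a neighbor of
`v i`, such that the territories are pairwise independent: any node of `{v i, w i}` is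
at distance at least `2` from any node of `{v j, w j}` for `i ≠ j`. -/
theorem independent_territory_set_exists
    (n k : ℕ) (hn : 6 ≤ n) (v : Fin k → ZMod n)
    (hv : ∀ i j : Fin k, i ≠ j → 3 ≤ cycleDist n (v i) (v j)) :
    ∃ w : Fin k → ZMod n,
      (∀ i, cycleDist n (v i) (w i) = 1) ∧
      ∀ i j : Fin k, i ≠ j →
        ∀ a ∈ ({v i, w i} : Set (ZMod n)), ∀ b ∈ ({v j, w j} : Set (ZMod n)),
          2 ≤ cycleDist n a b := by
  haveI : NeZero n := ⟨by omega⟩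
  have hone : (1 : ZMod n).val = 1 := ZMod.val_one_eq_one_mod n ▸ Nat.mod_eq_of_lt (by omega)
  refine ⟨fun i => v i + 1, ?_, ?_⟩
  · intro i
    unfold cycleDist
    have e1 : v i - (v i + 1) = -1 := by ring
    have e2 : v i + 1 - v i = 1 := by ring
    have hnegone : (-1 : ZMod n).val = n - 1 := by
      rw [ZMod.neg_val, if_neg (by
        intro h0
        have := congrArg (ZMod.val) h0
        rw [hone, ZMod.val_zero] at this; omega)]
      rw [hone]
    rw [e1, e2, hnegone, hone]
    omega
  · intro i j hij a ha b hb
    have h3 : 3 ≤ cycleDist n (v i) (v j) := hv i j hij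
    have h3' : 3 ≤ cycleDist n (v j) (v i) := hv j i (Ne.symm hij)
    have htrans : cycleDist n (v i + 1) (v j + 1) = cycleDist n (v i) (v j) := by
      unfold cycleDist
      have e1 : v i + 1 - (v j + 1) = v i - v j := by ring
      have e2 : v j + 1 - (v i + 1) = v j - v i := by ring
      rw [e1, e2]
    simp only [Set.mem_insert_iff, Set.mem_singleton_iff] at ha hb
    rcases ha with rfl | rfl <;> rcases hb with rfl | rfl
    · omega
    · rw [cycleDist_comm]
      exact cycleDist_key n hn _ _ h3'
    · exact cycleDist_key n hn _ _ h3
    · omega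
end

section
/- Consider 4 robots on a ring of n > 5·(2·d2)^4 nodes, where d2 = 3003, each with one of 2 colors, moving so that each robot moves at most one node per step and at least one robot changes position or color each step before termination. If the maximum pairwise distance stays below d2 for the first (2·d2)^4 steps, then by pigeonhole two of these configurations have identical relative sub-configurations within a window of d2 nodes; consequently the robots either loop without exploring new nodes (having visited at most 4·(2·d2)^4 < n nodes) or loop forever moving, so terminating exploration fails. Hence for any correct terminating exploration algorithm, the maximum pairwise distance reaches d2 within (2·d2)^4 steps. -/
/-- Encoding of an offset `e` (known to lie near `0` or near `n`) into `[0, 6006)`. -/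
def offCode (n e : ℕ) : ℕ := if e < 3003 then e else e + 2 * 3003 - n

lemma offCode_lt (n e : ℕ) (hn : 2 * 3003 < n) (he : e < n)
    (hv : e < 3003 ∨ n - e < 3003) : offCode n e < 2 * 3003 := by
  unfold offCode; split <;> omega

lemma offCode_inj (n e₁ e₂ : ℕ) (hn : 2 * 3003 < n) (he₁ : e₁ < n) (he₂ : e₂ < n)
    (hv₁ : e₁ < 3003 ∨ n - e₁ < 3003) (hv₂ : e₂ < 3003 ∨ n - e₂ < 3003)
    (h : offCode n e₁ = offCode n e₂) : e₁ = e₂ := by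
  unfold offCode at h; split_ifs at h <;> omega

/-- Let `d2 = 3003`.  Four two-colored robots on a ring of `n > 5·(2·d2)^4` nodes, each
moving at most one node per step, where once nothing changes the configuration is frozen
forever (so before termination at least one robot changes position or color each step),
whose behavior is deterministic and translation-invariant (identical relative
sub-configurations yield identical subsequent relative behavior), and which solve
terminating exploration (all nodes visited and eventual quiescence): then by pigeonhole
over the at most `(2·d2)^4` relative sub-configurations, the maximum pairwise distance
reaches `d2` within the first `(2·d2)^4` steps. -/
theorem distance_reaches_d2
    (n : ℕ) (hn : 5 * (2 * 3003) ^ 4 < n)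
    (pos : ℕ → Fin 4 → ZMod n) (col : ℕ → Fin 4 → Fin 2)
    (hmove : ∀ (t : ℕ) (r : Fin 4), cycleDist n (pos (t + 1) r) (pos t r) ≤ 1)
    (hprog : ∀ t : ℕ, (pos (t + 1) = pos t ∧ col (t + 1) = col t) →
      ∀ s ≥ t, pos s = pos t ∧ col s = col t)
    (hdet : ∀ (t u : ℕ) (c : ZMod n),
      ((∀ r, pos u r = pos t r + c) ∧ (∀ r, col u r = col t r)) →
      ∀ (s : ℕ) (r : Fin 4), pos (u + s) r = pos (t + s) r + c ∧
        col (u + s) r = col (t + s) r)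
    (hexp : ∀ x : ZMod n, ∃ (t : ℕ) (r : Fin 4), pos t r = x)
    (hterm : ∃ T : ℕ, ∀ s ≥ T, pos s = pos T ∧ col s = col T) :
    ∃ t ≤ (2 * 3003) ^ 4, ∃ i j : Fin 4,
      3003 ≤ cycleDist n (pos t i) (pos t j) := by
  by_contra hcon
  push_neg at hcon
  set N : ℕ := (2 * 3003) ^ 4 with hNdef
  have hN4 : 4 ≤ N := by norm_num [hNdef]
  have hnD : 2 * 3003 < n := by
    have : 2 * 3003 ≤ 5 * N := by norm_num [hNdef]
    omega
  have h0 : 0 < n := by omega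
  haveI : NeZero n := ⟨h0.ne'⟩
  -- offsets are valid
  have hoff : ∀ t ≤ N, ∀ r : Fin 4,
      (pos t r - pos t 0).val < 3003 ∨ n - (pos t r - pos t 0).val < 3003 := by
    intro t ht r
    have hc := hcon t ht r 0
    unfold cycleDist at hc
    rcases min_lt_iff.mp hc with h1 | h2
    · exact Or.inl h1
    · have : pos t 0 - pos t r = -(pos t r - pos t 0) := by ring
      rw [this, ZMod.neg_val] at h2
      split_ifs at h2 with hz
      · left; rw [hz]; simp
      · exact Or.inr h2
  -- pigeonhole map
  let f : Fin (N + 1) → (Fin 4 → Fin 2) × (Fin 3 → Fin (2 * 3003)) :=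
    fun t => (fun r => col t r,
      fun r => ⟨offCode n (pos t r.succ - pos t 0).val,
        offCode_lt n _ hnD (ZMod.val_lt _) (hoff t t.is_le r.succ)⟩)
  have hcard : Fintype.card ((Fin 4 → Fin 2) × (Fin 3 → Fin (2 * 3003)))
      < Fintype.card (Fin (N + 1)) := by
    simp only [Fintype.card_prod, Fintype.card_fun, Fintype.card_fin]
    norm_num [hNdef]
  obtain ⟨a, b, hab, hfab⟩ := Fintype.exists_ne_map_eq_of_card_lt f hcard
  -- wlog a < b
  obtain ⟨t, u, htu, hfe⟩ : ∃ t u : Fin (N + 1), t < u ∧ f t = f u := by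
    rcases lt_or_gt_of_ne hab with h | h
    · exact ⟨a, b, h, hfab⟩
    · exact ⟨b, a, h, hfab.symm⟩
  have hcols : ∀ r : Fin 4, col u r = col t r := by
    intro r
    have := congrFun (congrArg Prod.fst hfe) r
    exact this.symm
  have hoffeq : ∀ r : Fin 4, pos (u : ℕ) r - pos u 0 = pos (t : ℕ) r - pos t 0 := by
    intro r
    induction r using Fin.cases with
    | zero => simp
    | succ i =>
      have h1 := congrFun (congrArg Prod.snd hfe) i
      have h2 : offCode n (pos (t : ℕ) i.succ - pos t 0).val
          = offCode n (pos (u : ℕ) i.succ - pos u 0).val := congrArg Fin.val h1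
      have h3 := offCode_inj n _ _ hnD (ZMod.val_lt _) (ZMod.val_lt _)
        (hoff t t.is_le i.succ) (hoff u u.is_le i.succ) h2
      exact (ZMod.val_injective n h3).symm
  set c : ZMod n := pos (u : ℕ) 0 - pos (t : ℕ) 0 with hcdef
  have hpos : ∀ r, pos (u : ℕ) r = pos (t : ℕ) r + c := by
    intro r
    have := hoffeq r
    rw [hcdef]
    linear_combination this
  have H := hdet t u c ⟨hpos, hcols⟩
  obtain ⟨T, hT⟩ := hterm
  -- c = 0
  have hc0 : c = 0 := by
    have h1 := (H T 0).1
    have h2 : pos ((u : ℕ) + T) = pos T := (hT _ (by omega)).1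
    have h3 : pos ((t : ℕ) + T) = pos T := (hT _ (by omega)).1
    rw [h2, h3] at h1
    exact left_eq_add.mp h1
  have H' : ∀ (s : ℕ) (r : Fin 4), pos ((u : ℕ) + s) r = pos ((t : ℕ) + s) r ∧
      col ((u : ℕ) + s) r = col ((t : ℕ) + s) r := by
    intro s r
    have := H s r
    rw [hc0, add_zero] at this
    exact this
  set p : ℕ := (u : ℕ) - (t : ℕ) with hpdef
  have hp1 : 1 ≤ p := by
    have : (t : ℕ) < (u : ℕ) := htu
    omega
  have hup : (u : ℕ) = (t : ℕ) + p := by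
    have : (t : ℕ) < (u : ℕ) := htu
    omega
  -- periodicity
  have hper : ∀ (k s : ℕ) (r : Fin 4), pos ((t : ℕ) + s + k * p) r = pos ((t : ℕ) + s) r := by
    intro k
    induction k with
    | zero => intro s r; simp
    | succ k ih =>
      intro s r
      have h2 := (H' (s + k * p) r).1
      have harith : (u : ℕ) + (s + k * p) = (t : ℕ) + s + (k + 1) * p := by
        rw [hup]; ring
      have harith2 : (t : ℕ) + (s + k * p) = (t : ℕ) + s + k * p := by ring
      rw [harith, harith2] at h2
      rw [h2]; exact ih s r
  -- frozen from t
  have hfz : ∀ (s : ℕ) (r : Fin 4), pos ((t : ℕ) + s) r = pos T r := by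
    intro s r
    have h1 := hper T s r
    have h2 : pos ((t : ℕ) + s + T * p) = pos T := (hT _ (by nlinarith)).1
    rw [h2] at h1; exact h1.symm
  -- coverage by finitely many nodes
  have hsurj : Function.Surjective
      (fun q : Fin ((t : ℕ) + 1) × Fin 4 => pos (q.1 : ℕ) q.2) := by
    intro x
    obtain ⟨s, r, hs⟩ := hexp x
    by_cases hst : s ≤ (t : ℕ)
    · exact ⟨(⟨s, by omega⟩, r), hs⟩
    · refine ⟨(⟨(t : ℕ), by omega⟩, r), ?_⟩
      have h1 : pos (t : ℕ) r = pos T r := by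
        have := hfz 0 r; simpa using this
      have h2 : pos s r = pos T r := by
        have := hfz (s - (t : ℕ)) r
        have hs' : (t : ℕ) + (s - (t : ℕ)) = s := by omega
        rw [hs'] at this; exact this
      simp only []
      rw [h1, ← h2, hs]
  have hle := Fintype.card_le_of_surjective _ hsurj
  rw [ZMod.card] at hle
  simp only [Fintype.card_prod, Fintype.card_fin] at hle
  have htN : (t : ℕ) ≤ N := t.is_le
  omega
end

section
/- Let C be a configuration of robots on C_n such that node v_i is occupied by robots all of the same color and nodes v_{i-1}, v_{i+1} are free. If throughout the future no robot ever appears on v_{i-2} or on v_{i+1}, then under an adversarial scheduler the robots initially on v_i can only ever occupy nodes v_{i-1} and v_i. -/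
lemma cycleDist_step (n : ℕ) [NeZero n] (a b : ZMod n) (h : cycleDist n a b ≤ 1) :
    a = b ∨ a = b + 1 ∨ a = b - 1 := by
  unfold cycleDist at h
  rcases min_le_iff.mp h with h1 | h1
  · have h2 : (a - b).val = 0 ∨ (a - b).val = 1 := by omega
    have h3 : ((a - b).val : ZMod n) = a - b := ZMod.natCast_zmod_val _
    rcases h2 with h2 | h2 <;> rw [h2] at h3
    · left; push_cast at h3; linear_combination -h3
    · right; left; push_cast at h3; linear_combination -h3
  · have h2 : (b - a).val = 0 ∨ (b - a).val = 1 := by omega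
    have h3 : ((b - a).val : ZMod n) = b - a := ZMod.natCast_zmod_val _
    rcases h2 with h2 | h2 <;> rw [h2] at h3
    · left; push_cast at h3; linear_combination h3
    · right; right; push_cast at h3; linear_combination h3

/-- Let `C` be a configuration on `C_n` (`n ≥ 5`) where the robots on node `v` all have
the same color and both neighbors `v - 1`, `v + 1` are free.  If no robot ever appears
on `v - 2` or on `v + 1`, then (robots moving at most one node per step under the
adversarial scheduler) the robots initially on `v` only ever occupy `v - 1` and `v`. -/
theorem shuttle_between_two_nodes
    (n k : ℕ) (Col : Type) (hn : 5 ≤ n) (v : ZMod n)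
    (pos : ℕ → Fin k → ZMod n) (col0 : Fin k → Col)
    (hmove : ∀ (t : ℕ) (r : Fin k), cycleDist n (pos (t + 1) r) (pos t r) ≤ 1)
    (hsame : ∀ r s : Fin k, pos 0 r = v → pos 0 s = v → col0 r = col0 s)
    (hfree : ∀ r : Fin k, pos 0 r ≠ v - 1 ∧ pos 0 r ≠ v + 1)
    (hnever : ∀ (t : ℕ) (r : Fin k), pos t r ≠ v - 2 ∧ pos t r ≠ v + 1) :
    ∀ (t : ℕ) (r : Fin k), pos 0 r = v → pos t r ∈ ({v - 1, v} : Set (ZMod n)) := by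
  have : NeZero n := ⟨by omega⟩
  intro t r h0
  induction t with
  | zero => right; exact h0
  | succ t ih =>
    rcases cycleDist_step n _ _ (hmove t r) with h | h | h <;>
      rcases ih with h' | h' <;> simp only [Set.mem_insert_iff, Set.mem_singleton_iff] at h' ⊢ <;>
      rw [h'] at h
    · left; exact h
    · right; exact h
    · right; rw [h]; ring
    · exact absurd h ((hnever (t+1) r).2)
    · exact absurd (by rw [h]; ring : pos (t+1) r = v - 2) ((hnever (t+1) r).1)
    · left; exact h
end
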